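/- For w ∈ (0, 1/2), V32(w) < V0(w), with V0 and V32 as defined by the polynomial formulas for the unconstrained draw and the Round-of-32-constrained draw respectively. -/
import Mathlib


noncomputable def V0 (w : ℝ) : ℝ :=
  (1/31) * w^4 + (30/31) * ((1/15) * w^5 + (2/15) * w^6 + (4/15) * w^7 + (8/15) * w^8) +
    (60/31) * w^5 * (1-w) * (1 + (14/15) * w + (4/5) * w^2 + (8/15) * w^3)

noncomputable def V32 (w : ℝ) : ℝ :=
  (1/15) * w^5 + (2/15) * w^6 + (4/15) * w^7 + (8/15) * w^8 +
    2 * w^5 * (1-w) * (1 + (14/15) * w + (4/5) * w^2 + (8/15) * w^3)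

theorem V32_lt_V0 (w : ℝ) (hw0 : 0 < w) (hw : w < 1/2) : V32 w < V0 w := by
  have h1 : (0:ℝ) < 1 - 2*w := by linarith
  have h2 : (0:ℝ) < 15 - w - 2*w^2 - 4*w^3 - 8*w^4 := by nlinarith [pow_pos hw0 2, pow_pos hw0 3, pow_pos hw0 4, sq_nonneg w]
  have h4 : (0:ℝ) < w^4 := pow_pos hw0 4
  have key : V0 w - V32 w = (1/465) * w^4 * (1 - 2*w) * (15 - w - 2*w^2 - 4*w^3 - 8*w^4) := by
    unfold V0 V32; ring
  nlinarith [mul_pos (mul_pos (mul_pos (by norm_num : (0:ℝ) < 1/465) h4) h1) h2]
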